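/- arXiv:1305.2714 — 3 statements merged into one kernel-verified Lean document; each statement's English description precedes it below -/
import Mathlib

section
/- Let A ∈ ℝ^{m×n} satisfy AAᵀ = I_m, let C ⊆ ℝⁿ be a nonempty, closed and convex set, and let x₀ ∈ C. Define AC = {Ax : x ∈ C} and 𝒞(x₀, Aᵀ) = T_C(x₀)* ∩ Range(Aᵀ). Then the polar of the tangent cone of AC at Ax₀ satisfies T_{AC}(Ax₀)* = A·𝒞(x₀, Aᵀ), where A·S = {As : s ∈ S}. -/
open MeasureTheory ProbabilityTheory Filter Topology Metric
open scoped RealInnerProductSpace ENNReal Pointwise Matrix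

noncomputable section

/-- Standard Gaussian measure on `ℝⁿ` (mean zero, identity covariance). -/
def stdGaussian (n : ℕ) : Measure (EuclideanSpace ℝ (Fin n)) :=
  Measure.map (⇑(EuclideanSpace.equiv (Fin n) ℝ).symm)
    (Measure.pi fun _ : Fin n => gaussianReal 0 1)

/-- `D(K)`: mean squared distance of a standard Gaussian vector to `K`. -/
def msd (n : ℕ) (K : Set (EuclideanSpace ℝ (Fin n))) : ℝ :=
  ∫ g, (Metric.infDist g K) ^ 2 ∂(stdGaussian n)

variable {E : Type*} [NormedAddCommGroup E] [InnerProductSpace ℝ E]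

/-- Subdifferential of `f` at `x₀`. -/
def subdiff (f : E → ℝ) (x₀ : E) : Set E :=
  {s | ∀ x, f x₀ + ⟪s, x - x₀⟫ ≤ f x}

/-- Cone generated by a set: `{c • x : c ≥ 0, x ∈ A}`. -/
def coneOf (A : Set E) : Set E :=
  {y | ∃ c : ℝ, 0 ≤ c ∧ ∃ x ∈ A, y = c • x}

/-- Set of feasible directions of `C` at `x₀`. -/
def feasible (C : Set E) (x₀ : E) : Set E := {z | x₀ + z ∈ C}

/-- Tangent cone of `C` at `x₀`: the closure of the cone of feasible directions. -/
def tangentConeOf (C : Set E) (x₀ : E) : Set E := closure (coneOf (feasible C x₀))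

/-- Polar cone of a set `K`. -/
def polarCone (K : Set E) : Set E := {v | ∀ x ∈ K, ⟪v, x⟫ ≤ 0}

open Classical in
/-- Metric projection onto `K` (the unique nearest point when `K` is nonempty,
closed and convex). -/
def projSet (K : Set E) (x : E) : E :=
  if h : ∃ y ∈ K, dist x y = Metric.infDist x K then h.choose else x

/-- Matrix-vector multiplication as a map between Euclidean spaces. -/
def matVec {m n : ℕ} (A : Matrix (Fin m) (Fin n) ℝ) (x : EuclideanSpace ℝ (Fin n)) :
    EuclideanSpace ℝ (Fin m) :=
  (EuclideanSpace.equiv (Fin m) ℝ).symm (A.mulVec (EuclideanSpace.equiv (Fin n) ℝ x))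

/-- Statistical dimension of `K`: `E ‖Proj(g,K)‖²` for standard Gaussian `g`. -/
def statDim (n : ℕ) (K : Set (EuclideanSpace ℝ (Fin n))) : ℝ :=
  ∫ g, ‖projSet K g‖ ^ 2 ∂(stdGaussian n)

end

/-- Borel/product measurable structure on real matrices. -/
instance matrixMeasurableSpace {m n : ℕ} : MeasurableSpace (Matrix (Fin m) (Fin n) ℝ) :=
  (inferInstance : MeasurableSpace (Fin m → Fin n → ℝ))

/-!
Polar cones do not see closures, and the feasible directions of `AC` at `Ax₀` are the image
under `A` of those of `C` at `x₀`; so `T_{AC}(Ax₀)*` is the polar of `A · cone(F_C(x₀))`, which is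
the preimage of `T_C(x₀)*` under the adjoint `Aᵀ`. Because `AAᵀ = I`, the preimage of any set `K`
under `Aᵀ` is `A · (K ∩ Range(Aᵀ))`.
-/

open Set

theorem Function.LeftInverse.preimage_eq_image_inter_range {α β : Type*} {f : β → α}
    {g : α → β} (h : Function.LeftInverse f g) (s : Set β) :
    g ⁻¹' s = f '' (s ∩ range g) := by
  ext y
  constructor
  · exact fun hy => ⟨g y, ⟨hy, y, rfl⟩, h y⟩
  · rintro ⟨_, ⟨hs, x, rfl⟩, rfl⟩
    rwa [mem_preimage, h x]

section PolarCone

variable {E F : Type*} [NormedAddCommGroup E] [InnerProductSpace ℝ E]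
  [NormedAddCommGroup F] [InnerProductSpace ℝ F]

theorem polarCone_closure (S : Set E) : polarCone (closure S) = polarCone S :=
  Subset.antisymm (fun _ hv x hx => hv x (subset_closure hx)) fun v hv =>
    closure_minimal (t := {x | ⟪v, x⟫ ≤ 0}) hv
      (isClosed_le (continuous_const.inner continuous_id) continuous_const)

theorem polarCone_tangentConeOf (C : Set E) (x₀ : E) :
    polarCone (tangentConeOf C x₀) = polarCone (coneOf (feasible C x₀)) :=
  polarCone_closure _

theorem polarCone_image {f : E → F} {g : F → E} (hfg : ∀ x y, ⟪f x, y⟫ = ⟪x, g y⟫)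
    (K : Set E) : polarCone (f '' K) = g ⁻¹' polarCone K := by
  ext v
  refine forall_mem_image.trans (forall₂_congr fun x _ => ?_)
  rw [real_inner_comm, hfg, real_inner_comm]

theorem feasible_image (f : E →ₗ[ℝ] F) (C : Set E) (x₀ : E) :
    feasible (f '' C) (f x₀) = f '' feasible C x₀ := by
  ext z
  constructor
  · rintro ⟨x, hx, hxz⟩
    exact ⟨x - x₀, by simpa [feasible] using hx, by rw [map_sub, hxz, add_sub_cancel_left]⟩
  · rintro ⟨w, hw, rfl⟩
    exact ⟨x₀ + w, hw, map_add f x₀ w⟩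

theorem coneOf_image (f : E →ₗ[ℝ] F) (S : Set E) : coneOf (f '' S) = f '' coneOf S := by
  ext y
  constructor
  · rintro ⟨c, hc, _, ⟨x, hx, rfl⟩, rfl⟩
    exact ⟨c • x, ⟨c, hc, x, hx, rfl⟩, map_smul f c x⟩
  · rintro ⟨_, ⟨c, hc, x, hx, rfl⟩, rfl⟩
    exact ⟨c, hc, f x, mem_image_of_mem f hx, map_smul f c x⟩

theorem polarCone_tangentConeOf_image (f : E →ₗ[ℝ] F) {g : F → E}
    (hfg : ∀ x y, ⟪f x, y⟫ = ⟪x, g y⟫) (C : Set E) (x₀ : E) :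
    polarCone (tangentConeOf (f '' C) (f x₀)) = g ⁻¹' polarCone (tangentConeOf C x₀) := by
  rw [polarCone_tangentConeOf, polarCone_tangentConeOf, feasible_image, coneOf_image,
    polarCone_image hfg]

end PolarCone

theorem inner_matVec {m n : ℕ} (A : Matrix (Fin m) (Fin n) ℝ)
    (x : EuclideanSpace ℝ (Fin n)) (y : EuclideanSpace ℝ (Fin m)) :
    ⟪matVec A x, y⟫ = ⟪x, matVec Aᵀ y⟫ := by
  simp only [EuclideanSpace.inner_eq_star_dotProduct, star_trivial]
  change y.ofLp ⬝ᵥ (A *ᵥ x.ofLp) = (Aᵀ *ᵥ y.ofLp) ⬝ᵥ x.ofLp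
  rw [Matrix.dotProduct_mulVec, Matrix.mulVec_transpose]

theorem leftInverse_matVec_of_mul_eq_one {m n : ℕ} {A : Matrix (Fin m) (Fin n) ℝ}
    {B : Matrix (Fin n) (Fin m) ℝ} (h : A * B = 1) :
    Function.LeftInverse (matVec A) (matVec B) := fun y => by
  change WithLp.toLp 2 (A *ᵥ (B *ᵥ y.ofLp)) = y
  rw [Matrix.mulVec_mulVec, h, Matrix.one_mulVec]

theorem statement16_general {m n : ℕ} (A : Matrix (Fin m) (Fin n) ℝ) (hA : A * Aᵀ = 1)
    (C : Set (EuclideanSpace ℝ (Fin n)))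
    (x₀ : EuclideanSpace ℝ (Fin n)) :
    polarCone (tangentConeOf (matVec A '' C) (matVec A x₀)) =
      matVec A '' (polarCone (tangentConeOf C x₀) ∩ Set.range (matVec Aᵀ)) := by
  rw [← (leftInverse_matVec_of_mul_eq_one hA).preimage_eq_image_inter_range]
  -- `matVec A` is definitionally the linear map `Matrix.toLpLin 2 2 A`
  exact polarCone_tangentConeOf_image (Matrix.toLpLin 2 2 A) (inner_matVec A) C x₀

/-- Tangent cone of the image of a convex set under a partial unitary.
If `AAᵀ = I_m`, `C` is nonempty closed convex and `x₀ ∈ C`, then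
`T_{AC}(Ax₀)* = A · (T_C(x₀)* ∩ Range(Aᵀ))`. -/
theorem statement16 {m n : ℕ} (A : Matrix (Fin m) (Fin n) ℝ) (hA : A * Aᵀ = 1)
    (C : Set (EuclideanSpace ℝ (Fin n)))
    (hCne : C.Nonempty) (hCcl : IsClosed C) (hCconv : Convex ℝ C)
    (x₀ : EuclideanSpace ℝ (Fin n)) (hx₀ : x₀ ∈ C) :
    polarCone (tangentConeOf (matVec A '' C) (matVec A x₀)) =
      matVec A '' (polarCone (tangentConeOf C x₀) ∩ Set.range (matVec Aᵀ)) :=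
  statement16_general A hA C x₀
end

section
/- Let C ⊆ ℝⁿ be a nonempty, closed and convex set, let x₀ ∈ C, and let σ > 0 and λ ≥ 0 with τ = σλ. Let v ~ N(0, I_n), z = σv, and let x* be the unique minimizer over x ∈ C of τ f(x) + (1/2)‖(x₀+z) − x‖₂², for a convex function f : ℝⁿ → ℝ. Then: (i) E[‖x* − x₀‖₂²]/σ² ≤ D(λ∂f(x₀) + T_C(x₀)*); (ii) choosing λ* = argmin_{λ≥0} D(λ∂f(x₀) + T_C(x₀)*) and τ = λ*σ yields E[‖x* − x₀‖₂²]/σ² ≤ min_{λ≥0} D(λ∂f(x₀) + T_C(x₀)*). -/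
open MeasureTheory ProbabilityTheory Filter Topology Metric
open scoped RealInnerProductSpace ENNReal Pointwise Matrix

/-!
The objective `τ f + ½‖x₀ + z - ·‖²` is `1`-strongly convex, so its minimizer `x` over `C` beats
`x₀` by at least `½‖x - x₀‖²`. As `x - x₀` lies in the tangent cone, adding the subgradient
inequality for `s ∈ ∂f(x₀)` and polarity for `t ∈ T_C(x₀)*` gives
`‖x - x₀‖² ≤ ⟪z - (τ s + t), x - x₀⟫`, hence `‖x - x₀‖ ≤ ‖z - (τ s + t)‖`. With `z = σ w` and
`τ = σ λ` this reads `‖x - x₀‖ ≤ σ dist(w, λ ∂f(x₀) + T_C(x₀)*)`; squaring and integrating against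
the Gaussian gives (i), and (ii) is (i) at `λ*`. The subdifferential must be shown nonempty,
since `infDist` to the empty set is `0`.
-/

section Deterministic

variable {E : Type*} [NormedAddCommGroup E] [InnerProductSpace ℝ E]

lemma ConvexOn.subdiff_nonempty [CompleteSpace E] {f : E → ℝ} (hf : ConvexOn ℝ Set.univ f)
    (hfc : Continuous f) (x₀ : E) : (subdiff f x₀).Nonempty := by
  -- a hyperplane through `(x₀, f x₀)` supporting the open strict epigraph
  obtain ⟨φ, hφ⟩ := geometric_hahn_banach_open_point hf.convex_strict_epigraph
    (by simpa using isOpen_lt (hfc.comp continuous_fst) continuous_snd)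
    (x := (x₀, f x₀)) (by simp)
  have hle : ∀ x, φ (x, f x) ≤ φ (x₀, f x₀) := fun x =>
    le_of_tendsto (x := 𝓝[>] (f x))
      (((by fun_prop : Continuous fun t : ℝ => φ (x, t)).tendsto _).mono_left nhdsWithin_le_nhds)
      (eventually_nhdsWithin_of_forall fun t ht => (hφ (x, t) ⟨trivial, ht⟩).le)
  set β := φ (0, 1)
  have hφ_apply : ∀ x t, φ (x, t) = φ (x, 0) + t * β := fun x t => by
    rw [← smul_eq_mul, ← map_smul, ← map_add]; simp
  have hβ : β < 0 := by
    have h := hφ (x₀, f x₀ + 1) ⟨trivial, by linarith⟩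
    rw [hφ_apply, hφ_apply x₀ (f x₀)] at h
    linarith
  refine ⟨(InnerProductSpace.toDual ℝ E).symm ((-β)⁻¹ • φ.comp (.inl ℝ E ℝ)), fun x => ?_⟩
  have hsub : φ (x - x₀, 0) = φ (x, 0) - φ (x₀, 0) := by rw [← map_sub]; simp
  have hx := hle x
  rw [hφ_apply, hφ_apply x₀ (f x₀)] at hx
  rw [InnerProductSpace.toDual_symm_apply, ← le_sub_iff_add_le']
  simp only [smul_apply, ContinuousLinearMap.comp_apply, ContinuousLinearMap.inl_apply,
    smul_eq_mul, hsub]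
  rw [inv_mul_le_iff₀ (neg_pos.2 hβ)]
  linarith

lemma strongConvexOn_half_sq_norm_sub {s : Set E} (hs : Convex ℝ s) (y : E) :
    StrongConvexOn s 1 fun x => 1 / 2 * ‖y - x‖ ^ 2 := by
  rw [strongConvexOn_iff_convex]
  have h : (fun x : E => 1 / 2 * ‖y - x‖ ^ 2 - 1 / 2 * ‖x‖ ^ 2) =
      fun x => (-innerₛₗ ℝ y) x + 1 / 2 * ‖y‖ ^ 2 := by
    ext x
    rw [norm_sub_sq_real]
    simp only [LinearMap.neg_apply, innerₛₗ_apply_apply]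
    ring
  rw [h]
  exact ((-innerₛₗ ℝ y).convexOn hs).add_const _

lemma StrongConvexOn.add_sq_norm_sub_le_of_isMinOn {s : Set E} {m : ℝ} {g : E → ℝ}
    (hg : StrongConvexOn s m g) {a x : E} (ha : a ∈ s) (hmin : IsMinOn g s a) (hx : x ∈ s) :
    g a + m / 2 * ‖x - a‖ ^ 2 ≤ g x := by
  have hsegment : ∀ θ ∈ Set.Ioo (0 : ℝ) 1, g a + (1 - θ) * (m / 2 * ‖x - a‖ ^ 2) ≤ g x := by
    rintro θ ⟨hθ0, hθ1⟩
    have hmix := hg.2 ha hx (by linarith : 0 ≤ 1 - θ) hθ0.le (by ring)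
    have hle : g a ≤ g ((1 - θ) • a + θ • x) :=
      hmin (hg.1 ha hx (by linarith) hθ0.le (by ring))
    rw [norm_sub_rev] at hmix
    simp only [smul_eq_mul] at hmix
    have : θ * (g a + (1 - θ) * (m / 2 * ‖x - a‖ ^ 2)) ≤ θ * g x := by linarith
    exact le_of_mul_le_mul_left this hθ0
  have hlim := ((by fun_prop : Continuous fun θ : ℝ =>
    g a + (1 - θ) * (m / 2 * ‖x - a‖ ^ 2)).tendsto 0).mono_left
      (nhdsWithin_le_nhds (s := Set.Ioi 0))
  simpa using le_of_tendsto hlim (Filter.mem_of_superset (Ioo_mem_nhdsGT one_pos) hsegment)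

lemma sub_mem_tangentConeOf {C : Set E} {x₀ x : E} (hx : x ∈ C) :
    x - x₀ ∈ tangentConeOf C x₀ :=
  subset_closure ⟨1, zero_le_one, x - x₀, by simpa [feasible] using hx, (one_smul ℝ _).symm⟩

lemma zero_mem_polarCone (K : Set E) : (0 : E) ∈ polarCone K := fun _ _ => by simp

lemma smul_mem_polarCone {K : Set E} {c : ℝ} (hc : 0 ≤ c) {t : E} (ht : t ∈ polarCone K) :
    c • t ∈ polarCone K := fun x hx => by
  rw [real_inner_smul_left]
  exact mul_nonpos_of_nonneg_of_nonpos hc (ht x hx)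

lemma norm_le_of_sq_norm_le_inner {u w : E} (h : ‖u‖ ^ 2 ≤ ⟪w, u⟫) : ‖u‖ ≤ ‖w‖ := by
  nlinarith [real_inner_le_norm w u, norm_nonneg u, norm_nonneg w]

variable {C : Set E} {x₀ : E} {f : E → ℝ}

lemma norm_sub_le_of_isMinOn_of_mem_subdiff (hC : Convex ℝ C) (hx₀ : x₀ ∈ C)
    (hf : ConvexOn ℝ Set.univ f) {τ : ℝ} (hτ : 0 ≤ τ) (z : E) {x : E} (hx : x ∈ C)
    (hmin : IsMinOn (fun y => τ * f y + 1 / 2 * ‖(x₀ + z) - y‖ ^ 2) C x)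
    {s t : E} (hs : s ∈ subdiff f x₀) (ht : t ∈ polarCone (tangentConeOf C x₀)) :
    ‖x - x₀‖ ≤ ‖z - (τ • s + t)‖ := by
  have hstrong : StrongConvexOn C 1 fun y => τ * f y + 1 / 2 * ‖(x₀ + z) - y‖ ^ 2 := by
    have := (uniformConvexOn_zero.2 ((hf.subset (Set.subset_univ C) hC).smul hτ)).add
      (strongConvexOn_half_sq_norm_sub hC (x₀ + z))
    rwa [zero_add] at this
  have hgrowth := hstrong.add_sq_norm_sub_le_of_isMinOn hx hmin hx₀
  have hsub : τ * (f x₀ + ⟪s, x - x₀⟫) ≤ τ * f x := mul_le_mul_of_nonneg_left (hs x) hτ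
  have hpolar : ⟪t, x - x₀⟫ ≤ 0 := ht _ (sub_mem_tangentConeOf hx)
  apply norm_le_of_sq_norm_le_inner
  have e1 : x₀ + z - x = z - (x - x₀) := by abel
  rw [add_sub_cancel_left, e1, norm_sub_rev x₀ x, norm_sub_sq_real] at hgrowth
  rw [inner_sub_left, inner_add_left, real_inner_smul_left]
  nlinarith

lemma norm_sub_le_mul_infDist (hC : Convex ℝ C) (hx₀ : x₀ ∈ C) (hf : ConvexOn ℝ Set.univ f)
    (hsubdiff : (subdiff f x₀).Nonempty) {σ lam : ℝ} (hσ : 0 < σ) (hlam : 0 ≤ lam) {w x : E}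
    (hx : x ∈ C)
    (hmin : IsMinOn (fun y => (σ * lam) * f y + 1 / 2 * ‖(x₀ + σ • w) - y‖ ^ 2) C x) :
    ‖x - x₀‖ ≤ σ * Metric.infDist w (lam • subdiff f x₀ + polarCone (tangentConeOf C x₀)) := by
  rw [← div_le_iff₀' hσ, Metric.le_infDist
    (hsubdiff.smul_set.add ⟨0, zero_mem_polarCone _⟩)]
  rintro _ ⟨_, ⟨s, hs, rfl⟩, t, ht, rfl⟩
  rw [div_le_iff₀' hσ]
  calc ‖x - x₀‖ ≤ ‖σ • w - ((σ * lam) • s + σ • t)‖ :=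
        norm_sub_le_of_isMinOn_of_mem_subdiff hC hx₀ hf (by positivity) _ hx hmin hs
          (smul_mem_polarCone hσ.le ht)
    _ = σ * dist w (lam • s + t) := by
        rw [mul_smul, ← smul_add, ← smul_sub, norm_smul, Real.norm_of_nonneg hσ.le, dist_eq_norm]

end Deterministic

section Gaussian

lemma integrable_infDist_sq_of_memLp {F : Type*} [NormedAddCommGroup F] [MeasurableSpace F]
    [BorelSpace F] {μ : Measure F} [IsFiniteMeasure μ] (hμ : MemLp id 2 μ) {K : Set F}
    (hK : K.Nonempty) : Integrable (fun w => Metric.infDist w K ^ 2) μ := by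
  obtain ⟨k, hk⟩ := hK
  have hmem : MemLp (fun w => w - k) 2 μ := hμ.sub (memLp_const k)
  refine ((memLp_two_iff_integrable_sq_norm hmem.1).1 hmem).mono'
    ((Metric.continuous_infDist_pt K).pow 2).aestronglyMeasurable
    (Eventually.of_forall fun w => ?_)
  rw [Real.norm_of_nonneg (by positivity), ← dist_eq_norm]
  exact pow_le_pow_left₀ Metric.infDist_nonneg (Metric.infDist_le_dist_of_mem hk) 2

lemma stdGaussian_eq_stdGaussian_euclideanSpace (n : ℕ) :
    stdGaussian n = ProbabilityTheory.stdGaussian (EuclideanSpace ℝ (Fin n)) :=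
  map_pi_eq_stdGaussian

instance isGaussian_stdGaussian_euclideanSpace (n : ℕ) : IsGaussian (stdGaussian n) := by
  rw [stdGaussian_eq_stdGaussian_euclideanSpace]
  infer_instance

lemma integral_sq_norm_le_mul_msd {n : ℕ} {K : Set (EuclideanSpace ℝ (Fin n))} (hK : K.Nonempty)
    {F : Type*} [NormedAddCommGroup F] {X : EuclideanSpace ℝ (Fin n) → F} {c : ℝ}
    (hX : ∀ w, ‖X w‖ ≤ c * Metric.infDist w K) :
    ∫ w, ‖X w‖ ^ 2 ∂(stdGaussian n) ≤ c ^ 2 * msd n K := by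
  rw [msd, ← integral_const_mul]
  refine integral_mono_of_nonneg (Eventually.of_forall fun w => by positivity)
    ((integrable_infDist_sq_of_memLp IsGaussian.memLp_two_id hK).const_mul _)
    (Eventually.of_forall fun w => ?_)
  dsimp only
  rw [← mul_pow]
  exact pow_le_pow_left₀ (norm_nonneg _) (hX w) 2

end Gaussian

theorem statement18_general {n : ℕ} (C : Set (EuclideanSpace ℝ (Fin n)))
    (hCconv : Convex ℝ C)
    (x₀ : EuclideanSpace ℝ (Fin n)) (hx₀ : x₀ ∈ C)
    (f : EuclideanSpace ℝ (Fin n) → ℝ) (hf : ConvexOn ℝ Set.univ f)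
    (σ : ℝ) (hσ : 0 < σ)
    (xstar : ℝ → EuclideanSpace ℝ (Fin n) → EuclideanSpace ℝ (Fin n))
    (hxstar : ∀ τ : ℝ, 0 ≤ τ → ∀ w, xstar τ w ∈ C ∧
      IsMinOn (fun x => τ * f x + (1 / 2) * ‖(x₀ + σ • w) - x‖ ^ 2) C (xstar τ w)) :
    (∀ lam : ℝ, 0 ≤ lam →
      (∫ w, ‖xstar (σ * lam) w - x₀‖ ^ 2 ∂(stdGaussian n)) / σ ^ 2 ≤
        msd n (lam • subdiff f x₀ + polarCone (tangentConeOf C x₀))) ∧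
    (∀ lamstar : ℝ, 0 ≤ lamstar →
      (∀ lam : ℝ, 0 ≤ lam →
        msd n (lamstar • subdiff f x₀ + polarCone (tangentConeOf C x₀)) ≤
          msd n (lam • subdiff f x₀ + polarCone (tangentConeOf C x₀))) →
      (∫ w, ‖xstar (lamstar * σ) w - x₀‖ ^ 2 ∂(stdGaussian n)) / σ ^ 2 ≤
        sInf {d : ℝ | ∃ lam : ℝ, 0 ≤ lam ∧
          d = msd n (lam • subdiff f x₀ + polarCone (tangentConeOf C x₀))}) := by
  have hsubdiff := hf.subdiff_nonempty (continuousOn_univ.mp (hf.continuousOn isOpen_univ)) x₀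
  have nmse_le : ∀ lam : ℝ, 0 ≤ lam →
      (∫ w, ‖xstar (σ * lam) w - x₀‖ ^ 2 ∂(stdGaussian n)) / σ ^ 2 ≤
        msd n (lam • subdiff f x₀ + polarCone (tangentConeOf C x₀)) := fun lam hlam => by
    rw [div_le_iff₀' (by positivity)]
    refine integral_sq_norm_le_mul_msd
      (hsubdiff.smul_set.add ⟨0, zero_mem_polarCone _⟩) fun w => ?_
    obtain ⟨hmem, hmin⟩ := hxstar (σ * lam) (by positivity) w
    exact norm_sub_le_mul_infDist hCconv hx₀ hf hsubdiff hσ hlam hmem hmin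
  refine ⟨nmse_le, fun lamstar hlamstar hopt => ?_⟩
  rw [mul_comm]
  exact (nmse_le lamstar hlamstar).trans
    (le_csInf ⟨_, 0, le_rfl, rfl⟩ fun _ ⟨lam, hlam, hd⟩ => hd ▸ hopt lam hlam)

/-- MSE upper bounds for the constrained-and-regularized estimator.
With `z = σv`, `τ = σλ`: (i) for every `λ ≥ 0` the NMSE is at most
`D(λ∂f(x₀) + T_C(x₀)*)`; (ii) choosing `λ*` minimizing `D(λ∂f(x₀) + T_C(x₀)*)` and
`τ = λ*σ` yields NMSE at most `min_{λ≥0} D(λ∂f(x₀) + T_C(x₀)*)`. -/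
theorem statement18 {n : ℕ} (C : Set (EuclideanSpace ℝ (Fin n)))
    (hCne : C.Nonempty) (hCcl : IsClosed C) (hCconv : Convex ℝ C)
    (x₀ : EuclideanSpace ℝ (Fin n)) (hx₀ : x₀ ∈ C)
    (f : EuclideanSpace ℝ (Fin n) → ℝ) (hf : ConvexOn ℝ Set.univ f)
    (σ : ℝ) (hσ : 0 < σ)
    (xstar : ℝ → EuclideanSpace ℝ (Fin n) → EuclideanSpace ℝ (Fin n))
    (hxstar : ∀ τ : ℝ, 0 ≤ τ → ∀ w, xstar τ w ∈ C ∧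
      IsMinOn (fun x => τ * f x + (1 / 2) * ‖(x₀ + σ • w) - x‖ ^ 2) C (xstar τ w)) :
    (∀ lam : ℝ, 0 ≤ lam →
      (∫ w, ‖xstar (σ * lam) w - x₀‖ ^ 2 ∂(stdGaussian n)) / σ ^ 2 ≤
        msd n (lam • subdiff f x₀ + polarCone (tangentConeOf C x₀))) ∧
    (∀ lamstar : ℝ, 0 ≤ lamstar →
      (∀ lam : ℝ, 0 ≤ lam →
        msd n (lamstar • subdiff f x₀ + polarCone (tangentConeOf C x₀)) ≤
          msd n (lam • subdiff f x₀ + polarCone (tangentConeOf C x₀))) →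
      (∫ w, ‖xstar (lamstar * σ) w - x₀‖ ^ 2 ∂(stdGaussian n)) / σ ^ 2 ≤
        sInf {d : ℝ | ∃ lam : ℝ, 0 ≤ lam ∧
          d = msd n (lam • subdiff f x₀ + polarCone (tangentConeOf C x₀))}) :=
  statement18_general C hCconv x₀ hx₀ f hf σ hσ xstar hxstar
end

section
/- Let K ⊆ ℝⁿ be a closed convex set with 0 ∈ K, let z ∈ ℝⁿ, and let 0 < α < 1. Write p₁ = Proj(z, K) and p₂ = Proj(αz, K). Then ‖p₂‖₂ ≥ α‖p₁‖₂, and moreover ‖p₂‖₂/α ≤ ‖Proj(z, T_K(0))‖₂; in particular, the function g(t) = ‖Proj(t·w, K)‖₂/t (for a unit vector w, extended by g(0) = ‖Proj(w, T_K(0))‖₂) is continuous and nonincreasing on [0, ∞). -/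
open MeasureTheory ProbabilityTheory Filter Topology Metric
open scoped RealInnerProductSpace ENNReal Pointwise Matrix

/-!
Both inequalities come from the variational inequality `⟪x - P x, w - P x⟫ ≤ 0` of the metric
projection `P` onto `K`. Applied at `x` and at `β • x` (with `0 ≤ β ≤ 1`) it gives
`(‖P (β • x)‖ - ‖P x‖) * (‖P (β • x)‖ - β * ‖P x‖) ≤ 0`, so `t ↦ ‖P (t • z)‖ / t` is
nonincreasing on `(0, ∞)`. As `t → 0⁺` the sets `t⁻¹ • K` increase to the cone generated by `K`,
whose closure is `T_K(0)`, so `infDist z (t⁻¹ • K) → infDist z T_K(0)`. The same variational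
inequality for `T_K(0)` turns this convergence of distances into convergence of the rescaled
projections `t⁻¹ • P (t • z) ∈ T_K(0)` to `Proj(z, T_K(0))`, which identifies the limit at `0`.
-/

open Filter Topology Metric Set

section TangentCone

variable {E : Type*} [NormedAddCommGroup E] [InnerProductSpace ℝ E] {K : Set E}

theorem tangentConeOf_zero (K : Set E) : tangentConeOf K 0 = closure (coneOf K) := by
  simp [tangentConeOf, feasible]

theorem convex_coneOf (hconv : Convex ℝ K) (h0 : (0 : E) ∈ K) : Convex ℝ (coneOf K) := by
  rintro _ ⟨c₁, hc₁, x₁, hx₁, rfl⟩ _ ⟨c₂, hc₂, x₂, hx₂, rfl⟩ a b ha hb hab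
  rcases (add_nonneg (mul_nonneg ha hc₁) (mul_nonneg hb hc₂)).eq_or_lt with hγ | hγ
  · have h₁ : a * c₁ = 0 := by nlinarith [mul_nonneg ha hc₁, mul_nonneg hb hc₂]
    have h₂ : b * c₂ = 0 := by nlinarith [mul_nonneg ha hc₁, mul_nonneg hb hc₂]
    exact ⟨0, le_rfl, 0, h0, by simp [smul_smul, h₁, h₂]⟩
  · set γ := a * c₁ + b * c₂
    refine ⟨γ, hγ.le, (a * c₁ / γ) • x₁ + (b * c₂ / γ) • x₂,
      hconv hx₁ hx₂ (by positivity) (by positivity) (by rw [← add_div]; exact div_self hγ.ne'), ?_⟩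
    rw [smul_add, smul_smul, smul_smul, smul_smul, smul_smul,
      mul_div_cancel₀ _ hγ.ne', mul_div_cancel₀ _ hγ.ne']

theorem isClosed_tangentConeOf (K : Set E) (x₀ : E) : IsClosed (tangentConeOf K x₀) :=
  isClosed_closure

theorem convex_tangentConeOf_zero (hconv : Convex ℝ K) (h0 : (0 : E) ∈ K) :
    Convex ℝ (tangentConeOf K 0) :=
  tangentConeOf_zero K ▸ (convex_coneOf hconv h0).closure

theorem inv_smul_subset_tangentConeOf_zero {t : ℝ} (ht : 0 < t) : t⁻¹ • K ⊆ tangentConeOf K 0 := by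
  rintro _ ⟨k, hk, rfl⟩
  exact tangentConeOf_zero K ▸ subset_closure ⟨t⁻¹, (inv_pos.2 ht).le, k, hk, rfl⟩

theorem infDist_inv_smul_eq {t : ℝ} (ht : 0 < t) (z : E) :
    infDist z (t⁻¹ • K) = t⁻¹ * infDist (t • z) K := by
  have h := infDist_smul₀ (inv_ne_zero ht.ne') K (t • z)
  rwa [inv_smul_smul₀ ht.ne', norm_inv, Real.norm_of_nonneg ht.le] at h

theorem tendsto_infDist_inv_smul (hconv : Convex ℝ K) (h0 : (0 : E) ∈ K) (z : E) :
    Tendsto (fun t : ℝ => infDist z (t⁻¹ • K)) (𝓝[>] 0) (𝓝 (infDist z (tangentConeOf K 0))) := by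
  have hcone : (coneOf K).Nonempty := ⟨0, 0, le_rfl, 0, h0, by simp⟩
  refine tendsto_order.2 ⟨fun r hr => ?_, fun r hr => ?_⟩
  · filter_upwards [self_mem_nhdsWithin] with t (ht : 0 < t)
    exact hr.trans_le <| infDist_le_infDist_of_subset (inv_smul_subset_tangentConeOf_zero ht)
      ⟨_, smul_mem_smul_set h0⟩
  · rw [tangentConeOf_zero, infDist_closure] at hr
    obtain ⟨_, ⟨c, hc, k, hk, rfl⟩, hck⟩ := (infDist_lt_iff hcone).1 hr
    filter_upwards [Ioc_mem_nhdsGT (inv_pos.2 (by linarith : (0 : ℝ) < c + 1))]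
      with t ⟨ht, htc⟩
    have htc₁ : t * c ≤ 1 := by
      have := (le_inv_mul_iff₀ (a := t) (b := 1) (by linarith : (0 : ℝ) < c + 1)).1
        (by simpa using htc)
      nlinarith
    have hmem : c • k ∈ t⁻¹ • K := by
      rw [mem_inv_smul_set_iff₀ ht.ne', smul_smul]
      exact hconv.smul_mem_of_zero_mem h0 hk ⟨by positivity, htc₁⟩
    exact (infDist_le_dist_of_mem hmem).trans_lt hck

/-- The function `g` of the statement, extended to `t = 0` by its limit
(`tendsto_norm_projSet_smul_div`). -/
noncomputable def normProjRatio (K : Set E) (z : E) (t : ℝ) : ℝ :=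
  if t = 0 then ‖projSet (tangentConeOf K 0) z‖ else ‖projSet K (t • z)‖ / t

theorem normProjRatio_of_ne_zero (K : Set E) (z : E) {t : ℝ} (ht : t ≠ 0) :
    normProjRatio K z t = ‖projSet K (t • z)‖ / t :=
  if_neg ht

end TangentCone

section Projection

variable {E : Type*} [NormedAddCommGroup E] [InnerProductSpace ℝ E] [CompleteSpace E]
  {K : Set E}

theorem projSet_mem_and_norm_sub_eq (hcl : IsClosed K) (hconv : Convex ℝ K) (hne : K.Nonempty)
    (x : E) : projSet K x ∈ K ∧ ‖x - projSet K x‖ = infDist x K := by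
  have hinf : infDist x K = ⨅ w : K, ‖x - w‖ := by
    simp only [infDist_eq_iInf, dist_eq_norm]
  obtain ⟨v, hvK, hv⟩ := exists_norm_eq_iInf_of_complete_convex hne hcl.isComplete hconv x
  have h : ∃ y ∈ K, dist x y = infDist x K := ⟨v, hvK, by rw [dist_eq_norm, hv, hinf]⟩
  rw [projSet, dif_pos h, ← dist_eq_norm]
  exact h.choose_spec

theorem projSet_mem (hcl : IsClosed K) (hconv : Convex ℝ K) (hne : K.Nonempty) (x : E) :
    projSet K x ∈ K :=
  (projSet_mem_and_norm_sub_eq hcl hconv hne x).1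

theorem norm_sub_projSet (hcl : IsClosed K) (hconv : Convex ℝ K) (hne : K.Nonempty) (x : E) :
    ‖x - projSet K x‖ = infDist x K :=
  (projSet_mem_and_norm_sub_eq hcl hconv hne x).2

theorem inner_sub_projSet_nonpos (hcl : IsClosed K) (hconv : Convex ℝ K) (hne : K.Nonempty)
    (x : E) {w : E} (hw : w ∈ K) : ⟪x - projSet K x, w - projSet K x⟫ ≤ 0 := by
  refine (norm_eq_iInf_iff_real_inner_le_zero hconv (projSet_mem hcl hconv hne x)).1 ?_ w hw
  simp only [norm_sub_projSet hcl hconv hne x, infDist_eq_iInf, dist_eq_norm]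

theorem norm_sub_projSet_sq_add_le (hcl : IsClosed K) (hconv : Convex ℝ K) (hne : K.Nonempty)
    (x : E) {w : E} (hw : w ∈ K) :
    ‖w - projSet K x‖ ^ 2 + ‖x - projSet K x‖ ^ 2 ≤ ‖x - w‖ ^ 2 := by
  have hvi := inner_sub_projSet_nonpos hcl hconv hne x hw
  have hsplit : x - w = (x - projSet K x) - (w - projSet K x) := by abel
  rw [hsplit, norm_sub_sq_real (x - projSet K x)]
  linarith

theorem lipschitzWith_one_projSet (hcl : IsClosed K) (hconv : Convex ℝ K) (hne : K.Nonempty) :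
    LipschitzWith 1 (projSet K) := by
  refine LipschitzWith.of_dist_le_mul fun x y => ?_
  set px := projSet K x
  set py := projSet K y
  have hx := inner_sub_projSet_nonpos hcl hconv hne x (projSet_mem hcl hconv hne y)
  have hy := inner_sub_projSet_nonpos hcl hconv hne y (projSet_mem hcl hconv hne x)
  have hsum : ‖px - py‖ ^ 2 - ⟪x - y, px - py⟫ = ⟪x - px, py - px⟫ + ⟪y - py, px - py⟫ := by
    rw [← real_inner_self_eq_norm_sq]
    simp only [inner_sub_left, inner_sub_right, real_inner_comm px py]
    ring
  have hcs := real_inner_le_norm (x - y) (px - py)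
  rw [dist_eq_norm, dist_eq_norm, NNReal.coe_one, one_mul]
  nlinarith [norm_nonneg (px - py), norm_nonneg (x - y)]

theorem norm_projSet_smul_sub_mul_nonpos (hcl : IsClosed K) (hconv : Convex ℝ K)
    (hne : K.Nonempty) (x : E) {β : ℝ} (hβ : 0 ≤ β) :
    (‖projSet K (β • x)‖ - ‖projSet K x‖) * (‖projSet K (β • x)‖ - β * ‖projSet K x‖) ≤ 0 := by
  set p := projSet K x
  set q := projSet K (β • x)
  have hq := inner_sub_projSet_nonpos hcl hconv hne (β • x) (projSet_mem hcl hconv hne x)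
  have hp := inner_sub_projSet_nonpos hcl hconv hne x (projSet_mem hcl hconv hne (β • x))
  have hsum : ⟪β • x - q, p - q⟫ + β * ⟪x - p, q - p⟫ =
      ‖q‖ ^ 2 + β * ‖p‖ ^ 2 - (1 + β) * ⟪p, q⟫ := by
    simp only [inner_sub_left, inner_sub_right, real_inner_smul_left,
      real_inner_self_eq_norm_sq, real_inner_comm p q]
    ring
  calc (‖q‖ - ‖p‖) * (‖q‖ - β * ‖p‖)
      = ‖q‖ ^ 2 + β * ‖p‖ ^ 2 - (1 + β) * (‖p‖ * ‖q‖) := by ring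
    _ ≤ ‖q‖ ^ 2 + β * ‖p‖ ^ 2 - (1 + β) * ⟪p, q⟫ := by
      gcongr
      exact real_inner_le_norm p q
    _ ≤ 0 := by nlinarith

theorem mul_norm_projSet_le_norm_projSet_smul (hcl : IsClosed K) (hconv : Convex ℝ K)
    (hne : K.Nonempty) (x : E) {β : ℝ} (hβ₀ : 0 ≤ β) (hβ₁ : β ≤ 1) :
    β * ‖projSet K x‖ ≤ ‖projSet K (β • x)‖ := by
  by_contra! hlt
  have hle : β * ‖projSet K x‖ ≤ ‖projSet K x‖ :=
    mul_le_of_le_one_left (norm_nonneg _) hβ₁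
  nlinarith [norm_projSet_smul_sub_mul_nonpos hcl hconv hne x hβ₀]

theorem antitoneOn_norm_projSet_smul_div (hcl : IsClosed K) (hconv : Convex ℝ K)
    (hne : K.Nonempty) (z : E) :
    AntitoneOn (fun t : ℝ => ‖projSet K (t • z)‖ / t) (Ioi 0) := by
  intro s (hs : 0 < s) t (ht : 0 < t) hst
  have h := mul_norm_projSet_le_norm_projSet_smul hcl hconv hne (t • z)
    (div_pos hs ht).le (div_le_one_of_le₀ hst ht.le)
  rw [smul_smul, div_mul_cancel₀ _ ht.ne', div_mul_eq_mul_div, mul_div_assoc] at h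
  exact (le_div_iff₀' hs).2 h

theorem tendsto_inv_smul_projSet_smul (hcl : IsClosed K) (hconv : Convex ℝ K)
    (h0 : (0 : E) ∈ K) (z : E) :
    Tendsto (fun t : ℝ => t⁻¹ • projSet K (t • z)) (𝓝[>] 0)
      (𝓝 (projSet (tangentConeOf K 0) z)) := by
  set T := tangentConeOf K 0
  have hTcl : IsClosed T := isClosed_tangentConeOf K 0
  have hTconv : Convex ℝ T := convex_tangentConeOf_zero hconv h0
  have hTne : T.Nonempty := ⟨_, inv_smul_subset_tangentConeOf_zero one_pos (smul_mem_smul_set h0)⟩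
  set p := projSet T z
  set q := fun t : ℝ => t⁻¹ • projSet K (t • z)
  have hqT : ∀ t : ℝ, 0 < t → q t ∈ T := fun t ht =>
    inv_smul_subset_tangentConeOf_zero ht (smul_mem_smul_set (projSet_mem hcl hconv ⟨0, h0⟩ _))
  have hzq : ∀ t : ℝ, 0 < t → ‖z - q t‖ = infDist z (t⁻¹ • K) := fun t ht => by
    rw [infDist_inv_smul_eq ht, ← norm_sub_projSet hcl hconv ⟨0, h0⟩, ← Real.norm_of_nonneg
      (inv_pos.2 ht).le, ← norm_smul, smul_sub, inv_smul_smul₀ ht.ne']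
  -- `‖q t - p‖ ^ 2 ≤ ‖z - q t‖ ^ 2 - ‖z - p‖ ^ 2`, and the right side tends to `0`
  have hgap : Tendsto (fun t : ℝ => √(infDist z (t⁻¹ • K) ^ 2 - ‖z - p‖ ^ 2)) (𝓝[>] 0) (𝓝 0) := by
    have h := ((tendsto_infDist_inv_smul hconv h0 z).pow 2).sub_const (‖z - p‖ ^ 2)
    rw [← norm_sub_projSet hTcl hTconv hTne z, sub_self] at h
    simpa using h.sqrt
  rw [tendsto_iff_norm_sub_tendsto_zero]
  refine squeeze_zero' (Eventually.of_forall fun t => norm_nonneg _) ?_ hgap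
  filter_upwards [self_mem_nhdsWithin] with t (ht : 0 < t)
  refine Real.le_sqrt_of_sq_le ?_
  rw [← hzq t ht]
  linarith [norm_sub_projSet_sq_add_le hTcl hTconv hTne z (hqT t ht)]

theorem tendsto_norm_projSet_smul_div (hcl : IsClosed K) (hconv : Convex ℝ K)
    (h0 : (0 : E) ∈ K) (z : E) :
    Tendsto (fun t : ℝ => ‖projSet K (t • z)‖ / t) (𝓝[>] 0)
      (𝓝 ‖projSet (tangentConeOf K 0) z‖) := by
  refine (tendsto_inv_smul_projSet_smul hcl hconv h0 z).norm.congr' ?_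
  filter_upwards [self_mem_nhdsWithin] with t (ht : 0 < t)
  rw [norm_smul, norm_inv, Real.norm_of_nonneg ht.le, inv_mul_eq_div]

theorem norm_projSet_smul_div_le (hcl : IsClosed K) (hconv : Convex ℝ K) (h0 : (0 : E) ∈ K)
    (z : E) {t : ℝ} (ht : 0 < t) :
    ‖projSet K (t • z)‖ / t ≤ ‖projSet (tangentConeOf K 0) z‖ := by
  refine ge_of_tendsto (tendsto_norm_projSet_smul_div hcl hconv h0 z) ?_
  filter_upwards [Ioc_mem_nhdsGT ht] with s ⟨hs, hst⟩
  exact antitoneOn_norm_projSet_smul_div hcl hconv ⟨0, h0⟩ z hs ht hst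

theorem continuousOn_normProjRatio (hcl : IsClosed K) (hconv : Convex ℝ K) (h0 : (0 : E) ∈ K)
    (z : E) : ContinuousOn (normProjRatio K z) (Ici 0) := by
  have hpos : normProjRatio K z =ᶠ[𝓝[>] 0] fun t => ‖projSet K (t • z)‖ / t := by
    filter_upwards [self_mem_nhdsWithin] with t (ht : 0 < t)
    exact normProjRatio_of_ne_zero K z ht.ne'
  intro t (ht : 0 ≤ t)
  rcases ht.eq_or_lt with rfl | ht
  · rw [← continuousWithinAt_Ioi_iff_Ici, ContinuousWithinAt, normProjRatio, if_pos rfl]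
    exact (tendsto_norm_projSet_smul_div hcl hconv h0 z).congr' hpos.symm
  · have hproj := (lipschitzWith_one_projSet hcl hconv ⟨0, h0⟩).continuous
    have hcont : ContinuousAt (fun s : ℝ => ‖projSet K (s • z)‖ / s) t :=
      ((hproj.comp (continuous_id.smul continuous_const)).norm.continuousAt).div
        continuousAt_id ht.ne'
    refine (hcont.congr ?_).continuousWithinAt
    filter_upwards [Ioi_mem_nhds ht] with s (hs : 0 < s)
    exact (normProjRatio_of_ne_zero K z hs.ne').symm

theorem antitoneOn_normProjRatio (hcl : IsClosed K) (hconv : Convex ℝ K) (h0 : (0 : E) ∈ K)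
    (z : E) : AntitoneOn (normProjRatio K z) (Ici 0) := by
  intro s (hs : 0 ≤ s) t (ht : 0 ≤ t) hst
  rcases ht.eq_or_lt with rfl | ht
  · rw [le_antisymm hst hs]
  rw [normProjRatio_of_ne_zero K z ht.ne']
  rcases hs.eq_or_lt with rfl | hs
  · rw [normProjRatio, if_pos rfl]
    exact norm_projSet_smul_div_le hcl hconv h0 z ht
  · rw [normProjRatio_of_ne_zero K z hs.ne']
    exact antitoneOn_norm_projSet_smul_div hcl hconv ⟨0, h0⟩ z hs ht hst

end Projection

/-- Monotonicity of the normalized projection.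
For a closed convex `K ∋ 0`, `z ∈ ℝⁿ` and `0 < α < 1`, with `p₁ = Proj(z,K)` and
`p₂ = Proj(αz,K)`: `‖p₂‖ ≥ α‖p₁‖` and `‖p₂‖/α ≤ ‖Proj(z, T_K(0))‖`; moreover for any
unit vector `w` the function `g(t) = ‖Proj(t·w,K)‖/t` (with
`g(0) = ‖Proj(w, T_K(0))‖`) is continuous and nonincreasing on `[0,∞)`. -/
theorem statement19 {n : ℕ} (K : Set (EuclideanSpace ℝ (Fin n)))
    (hKcl : IsClosed K) (hKconv : Convex ℝ K)
    (h0K : (0 : EuclideanSpace ℝ (Fin n)) ∈ K)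
    (z : EuclideanSpace ℝ (Fin n)) (α : ℝ) (hα0 : 0 < α) (hα1 : α < 1) :
    α * ‖projSet K z‖ ≤ ‖projSet K (α • z)‖ ∧
    ‖projSet K (α • z)‖ / α ≤ ‖projSet (tangentConeOf K 0) z‖ ∧
    ∀ w : EuclideanSpace ℝ (Fin n), ‖w‖ = 1 →
      ContinuousOn
        (fun t : ℝ =>
          if t = 0 then ‖projSet (tangentConeOf K 0) w‖ else ‖projSet K (t • w)‖ / t)
        (Set.Ici 0) ∧
      AntitoneOn
        (fun t : ℝ =>
          if t = 0 then ‖projSet (tangentConeOf K 0) w‖ else ‖projSet K (t • w)‖ / t)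
        (Set.Ici 0) :=
  ⟨mul_norm_projSet_le_norm_projSet_smul hKcl hKconv ⟨0, h0K⟩ z hα0.le hα1.le,
    norm_projSet_smul_div_le hKcl hKconv h0K z hα0,
    fun w _ => ⟨continuousOn_normProjRatio hKcl hKconv h0K w,
      antitoneOn_normProjRatio hKcl hKconv h0K w⟩⟩
end
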